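/- The limiting opinion vector x_f = (1/n) P^{-1} 𝟙_n 𝟙_n^T P x_0 is explicitly given by: (x_f)_i = −γ s/n for every i ∈ V1 and (x_f)_j = s/n for every j ∈ V2, where s = 𝟙_n^T P x_0 = Σ_{j ∈ V2} (x_0)_j − γ^{-1} Σ_{i ∈ V1} (x_0)_i. In particular, all agents in V1 share a common final opinion, all agents in V2 share a common final opinion, and (x_f)_i = −γ (x_f)_j for i ∈ V1, j ∈ V2, so the dominant group's final opinion has γ times the magnitude and opposite sign of the other group's final opinion. -/

import Mathlib

/-!
`P` is diagonal with entries `-γ⁻¹` on `V1` and `1` on `V2`. Since `𝟙 𝟙ᵀ y = (𝟙ᵀ y) 𝟙`,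
`x_f = (1/n) P⁻¹ 𝟙 (𝟙ᵀ P x₀) = (s/n) P⁻¹ 𝟙`, and `P⁻¹ 𝟙` has entries `-γ` on `V1` and `1` on `V2`.
-/

open Matrix

namespace Matrix

theorem conj_vecMulVec_mulVec {l m n o α : Type*} [Fintype m] [Fintype n] [Fintype o]
    [CommSemiring α] (A : Matrix l m α) (u : m → α) (v : n → α) (B : Matrix n o α)
    (x : o → α) : (A * vecMulVec u v * B) *ᵥ x = (v ⬝ᵥ B *ᵥ x) • A *ᵥ u := by
  rw [← mulVec_mulVec, ← mulVec_mulVec, vecMulVec_mulVec, op_smul_eq_smul, mulVec_smul]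

variable {n K : Type*} [Fintype n] [DecidableEq n] [Field K]

theorem inv_diagonal_of_ne_zero {d : n → K} (hd : ∀ i, d i ≠ 0) :
    (diagonal d)⁻¹ = diagonal d⁻¹ := by
  refine inv_eq_left_inv ?_
  rw [diagonal_mul_diagonal, ← diagonal_one]
  exact congrArg diagonal (funext fun i => inv_mul_cancel₀ (hd i))

theorem diagonal_mul_inv_diagonal (a : n → K) {b : n → K} (hb : ∀ i, b i ≠ 0) :
    diagonal a * (diagonal b)⁻¹ = diagonal (a / b) := by
  rw [inv_diagonal_of_ne_zero hb, diagonal_mul_diagonal, div_eq_mul_inv]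
  rfl

end Matrix

theorem limiting_opinion_vector_general
    (n r : ℕ)
    (γ : ℝ) (hγ : 0 < γ)
    (Q R P : Matrix (Fin n) (Fin n) ℝ)
    (hQ : Q = Matrix.diagonal (fun i : Fin n => if (i : ℕ) < r then γ else 1))
    (hR : R = Matrix.diagonal (fun i : Fin n => if (i : ℕ) < r then (-1 : ℝ) else 1))
    (hP : P = R * Q⁻¹)
    (x0 xf : Fin n → ℝ) (s : ℝ)
    (hs : s = ∑ i : Fin n, (P *ᵥ x0) i)
    (hxf : xf = ((1 : ℝ) / n) •
      ((P⁻¹ * Matrix.vecMulVec (fun _ : Fin n => (1 : ℝ)) (fun _ : Fin n => (1 : ℝ)) * P)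
        *ᵥ x0)) :
    (s = (∑ j : Fin n, if (j : ℕ) < r then 0 else x0 j) -
        γ⁻¹ * (∑ i : Fin n, if (i : ℕ) < r then x0 i else 0)) ∧
    (∀ i : Fin n, (i : ℕ) < r → xf i = -γ * s / n) ∧
    (∀ j : Fin n, ¬ (j : ℕ) < r → xf j = s / n) ∧
    (∀ i j : Fin n, (i : ℕ) < r → ¬ (j : ℕ) < r → xf i = -γ * xf j) := by
  set w : Fin n → ℝ := fun i => if (i : ℕ) < r then -γ⁻¹ else 1 with hw
  have hw0 : ∀ i, w i ≠ 0 := fun i => by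
    simp only [hw]; split_ifs <;> simp [hγ.ne']
  have hPw : P = diagonal w := by
    rw [hP, hR, hQ, diagonal_mul_inv_diagonal _ fun i => by split_ifs <;> simp [hγ.ne']]
    congr 1; funext i; simp only [hw, Pi.div_apply]; split_ifs <;> simp [neg_div, one_div]
  have hxfw : ∀ i, xf i = (w i)⁻¹ * s / n := fun i => by
    have hs1 : (fun _ => 1) ⬝ᵥ P *ᵥ x0 = s := hs ▸ one_dotProduct _
    rw [hxf, conj_vecMulVec_mulVec, hs1, hPw, inv_diagonal_of_ne_zero hw0]
    simp only [Pi.smul_apply, mulVec_diagonal, smul_eq_mul, Pi.inv_apply]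
    ring
  refine ⟨?_, fun i hi => ?_, fun j hj => ?_, fun i j hi hj => ?_⟩
  · rw [hs, hPw, Finset.mul_sum, ← Finset.sum_sub_distrib]
    refine Finset.sum_congr rfl fun i _ => ?_
    simp only [mulVec_diagonal, hw]; split_ifs <;> ring
  · simp [hxfw, hw, hi]
  · simp [hxfw, hw, hj]
  · simp [hxfw, hw, hi, hj]; ring

/-- The limiting opinion vector `x_f = (1/n) P⁻¹ 𝟙 𝟙ᵀ P x₀` satisfies
`(x_f)_i = −γ s / n` for `i ∈ V1` and `(x_f)_j = s / n` for `j ∈ V2`, where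
`s = 𝟙ᵀ P x₀ = Σ_{j ∈ V2} (x₀)_j − γ⁻¹ Σ_{i ∈ V1} (x₀)_i`.  In particular all agents of
`V1` (resp. `V2`) share a common final opinion and `(x_f)_i = −γ (x_f)_j` for `i ∈ V1`,
`j ∈ V2`. -/
theorem limiting_opinion_vector
    (n r : ℕ) (hn : 2 ≤ n) (hr : 1 ≤ r) (hrn : r < n)
    (γ : ℝ) (hγ : 0 < γ)
    (Q R P : Matrix (Fin n) (Fin n) ℝ)
    (hQ : Q = Matrix.diagonal (fun i : Fin n => if (i : ℕ) < r then γ else 1))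
    (hR : R = Matrix.diagonal (fun i : Fin n => if (i : ℕ) < r then (-1 : ℝ) else 1))
    (hP : P = R * Q⁻¹)
    (x0 xf : Fin n → ℝ) (s : ℝ)
    (hs : s = ∑ i : Fin n, (P *ᵥ x0) i)
    (hxf : xf = ((1 : ℝ) / n) •
      ((P⁻¹ * Matrix.vecMulVec (fun _ : Fin n => (1 : ℝ)) (fun _ : Fin n => (1 : ℝ)) * P)
        *ᵥ x0)) :
    (s = (∑ j : Fin n, if (j : ℕ) < r then 0 else x0 j) -
        γ⁻¹ * (∑ i : Fin n, if (i : ℕ) < r then x0 i else 0)) ∧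
    (∀ i : Fin n, (i : ℕ) < r → xf i = -γ * s / n) ∧
    (∀ j : Fin n, ¬ (j : ℕ) < r → xf j = s / n) ∧
    (∀ i j : Fin n, (i : ℕ) < r → ¬ (j : ℕ) < r → xf i = -γ * xf j) :=
  limiting_opinion_vector_general n r γ hγ Q R P hQ hR hP x0 xf s hs hxf
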